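/- arXiv:1410.0910 — 3 statements merged into one kernel-verified Lean document; each statement's English description precedes it below -/
import Mathlib

section
/- The Darboux-Halphen system t1'+t2' = t1 t2, t2'+t3' = t2 t3, t1'+t3' = t1 t3 is invariant under the change of variables w = (az+b)/(a'z+b'), t_i(z) = -2a'/(a'z+b') + (ab'-ba')/(a'z+b')^2 · s_i(w): if s1, s2, s3 satisfy the system in the variable w (with ab' - ba' ≠ 0 and a'z+b' ≠ 0), then t1, t2, t3 satisfy the same system in the variable z. -/
/-!
Write `tᵢ = ℓ + p · (sᵢ ∘ φ)` with `φ` the Möbius map, `p = φ'` and `ℓ = φ''/φ'`. The chain rule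
gives `tᵢ' = ℓ' + ℓ p (sᵢ ∘ φ) + p² (sᵢ' ∘ φ)`, hence
`t₁' + t₂' - t₁ t₂ = (2ℓ' - ℓ²) + p² ((s₁' + s₂' - s₁ s₂) ∘ φ)`.
The first term is twice the Schwarzian derivative of `φ`, which vanishes for Möbius maps, so each
equation of the system is carried to itself.
-/

section ChangeOfVariables

variable {𝕜 : Type*} [NontriviallyNormedField 𝕜] {φ p ℓ s₁ s₂ : 𝕜 → 𝕜} {ℓ' z : 𝕜}

theorem hasDerivAt_add_mul_comp {s : 𝕜 → 𝕜} (hφ : HasDerivAt φ (p z) z)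
    (hp : HasDerivAt p (ℓ z * p z) z) (hℓ : HasDerivAt ℓ ℓ' z)
    (hs : DifferentiableAt 𝕜 s (φ z)) :
    HasDerivAt (fun x => ℓ x + p x * s (φ x))
      (ℓ' + ℓ z * p z * s (φ z) + p z ^ 2 * deriv s (φ z)) z :=
  (hℓ.fun_add (hp.fun_mul (hs.hasDerivAt.comp z hφ))).congr_deriv <| by
    rw [Function.comp_apply]
    ring

theorem deriv_add_deriv_sub_mul_of_add_mul_comp (hφ : HasDerivAt φ (p z) z)
    (hp : HasDerivAt p (ℓ z * p z) z) (hℓ : HasDerivAt ℓ ℓ' z)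
    (hs₁ : DifferentiableAt 𝕜 s₁ (φ z)) (hs₂ : DifferentiableAt 𝕜 s₂ (φ z)) :
    deriv (fun x => ℓ x + p x * s₁ (φ x)) z + deriv (fun x => ℓ x + p x * s₂ (φ x)) z
        - (ℓ z + p z * s₁ (φ z)) * (ℓ z + p z * s₂ (φ z)) =
      (2 * ℓ' - ℓ z ^ 2) +
        p z ^ 2 * (deriv s₁ (φ z) + deriv s₂ (φ z) - s₁ (φ z) * s₂ (φ z)) := by
  rw [(hasDerivAt_add_mul_comp hφ hp hℓ hs₁).deriv,
    (hasDerivAt_add_mul_comp hφ hp hℓ hs₂).deriv]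
  ring

end ChangeOfVariables

section Mobius

variable {𝕜 : Type*} [NontriviallyNormedField 𝕜] {a b a' b' z : 𝕜}

theorem hasDerivAt_mobius (hz : a' * z + b' ≠ 0) :
    HasDerivAt (fun x => (a * x + b) / (a' * x + b')) ((a * b' - b * a') / (a' * z + b') ^ 2) z :=
  (((hasDerivAt_const_mul a).add_const b).div ((hasDerivAt_const_mul a').add_const b')
    hz).congr_deriv (by ring)

theorem hasDerivAt_const_div_affine (c : 𝕜) (hz : a' * z + b' ≠ 0) :
    HasDerivAt (fun x => c / (a' * x + b')) (-c * a' / (a' * z + b') ^ 2) z :=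
  ((hasDerivAt_const z c).div ((hasDerivAt_const_mul a').add_const b') hz).congr_deriv (by ring)

theorem hasDerivAt_const_div_affine_sq (c : 𝕜) (hz : a' * z + b' ≠ 0) :
    HasDerivAt (fun x => c / (a' * x + b') ^ 2)
      (-2 * a' / (a' * z + b') * (c / (a' * z + b') ^ 2)) z := by
  refine ((hasDerivAt_const z c).div (((hasDerivAt_const_mul a').add_const b').fun_pow 2)
    (pow_ne_zero 2 hz)).congr_deriv ?_
  field_simp
  ring

theorem deriv_add_deriv_eq_mul_of_mobius {s₁ s₂ : 𝕜 → 𝕜} (hz : a' * z + b' ≠ 0)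
    (hs₁ : DifferentiableAt 𝕜 s₁ ((a * z + b) / (a' * z + b')))
    (hs₂ : DifferentiableAt 𝕜 s₂ ((a * z + b) / (a' * z + b')))
    (hsys : deriv s₁ ((a * z + b) / (a' * z + b')) + deriv s₂ ((a * z + b) / (a' * z + b')) =
      s₁ ((a * z + b) / (a' * z + b')) * s₂ ((a * z + b) / (a' * z + b'))) :
    deriv (fun x => -2 * a' / (a' * x + b') +
        ((a * b' - b * a') / (a' * x + b') ^ 2) * s₁ ((a * x + b) / (a' * x + b'))) z +
      deriv (fun x => -2 * a' / (a' * x + b') +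
        ((a * b' - b * a') / (a' * x + b') ^ 2) * s₂ ((a * x + b) / (a' * x + b'))) z =
    (-2 * a' / (a' * z + b') +
        ((a * b' - b * a') / (a' * z + b') ^ 2) * s₁ ((a * z + b) / (a' * z + b'))) *
      (-2 * a' / (a' * z + b') +
        ((a * b' - b * a') / (a' * z + b') ^ 2) * s₂ ((a * z + b) / (a' * z + b'))) := by
  rw [← sub_eq_zero, deriv_add_deriv_sub_mul_of_add_mul_comp
    (ℓ := fun x => -2 * a' / (a' * x + b')) (p := fun x => (a * b' - b * a') / (a' * x + b') ^ 2)
    (hasDerivAt_mobius hz)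
    (hasDerivAt_const_div_affine_sq _ hz) (hasDerivAt_const_div_affine _ hz) hs₁ hs₂, hsys,
    sub_self, mul_zero, add_zero]
  field_simp
  ring

end Mobius

theorem darboux_halphen_invariance_general
    (a b a' b' : ℂ)
    (s1 s2 s3 : ℂ → ℂ)
    (hs1 : Differentiable ℂ s1) (hs2 : Differentiable ℂ s2)
    (hs3 : Differentiable ℂ s3)
    (hsys1 : ∀ w, deriv s1 w + deriv s2 w = s1 w * s2 w)
    (hsys2 : ∀ w, deriv s2 w + deriv s3 w = s2 w * s3 w)
    (hsys3 : ∀ w, deriv s1 w + deriv s3 w = s1 w * s3 w)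
    (w : ℂ → ℂ) (hw : w = fun z => (a * z + b) / (a' * z + b'))
    (t1 t2 t3 : ℂ → ℂ)
    (ht1 : t1 = fun z => -2 * a' / (a' * z + b') +
      ((a * b' - b * a') / (a' * z + b') ^ 2) * s1 (w z))
    (ht2 : t2 = fun z => -2 * a' / (a' * z + b') +
      ((a * b' - b * a') / (a' * z + b') ^ 2) * s2 (w z))
    (ht3 : t3 = fun z => -2 * a' / (a' * z + b') +
      ((a * b' - b * a') / (a' * z + b') ^ 2) * s3 (w z)) :
    ∀ z : ℂ, a' * z + b' ≠ 0 →
      deriv t1 z + deriv t2 z = t1 z * t2 z ∧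
      deriv t2 z + deriv t3 z = t2 z * t3 z ∧
      deriv t1 z + deriv t3 z = t1 z * t3 z := by
  intro z hz
  subst hw ht1 ht2 ht3
  exact ⟨deriv_add_deriv_eq_mul_of_mobius hz (hs1 _) (hs2 _) (hsys1 _),
    deriv_add_deriv_eq_mul_of_mobius hz (hs2 _) (hs3 _) (hsys2 _),
    deriv_add_deriv_eq_mul_of_mobius hz (hs1 _) (hs3 _) (hsys3 _)⟩

/-- Invariance of the Darboux-Halphen system under the Möbius-type change of
variables `w = (az+b)/(a'z+b')`,
`tᵢ(z) = -2a'/(a'z+b') + ((ab'-ba')/(a'z+b')²)·sᵢ(w)`. -/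
theorem darboux_halphen_invariance
    (a b a' b' : ℂ) (hab : a * b' - b * a' ≠ 0)
    (s1 s2 s3 : ℂ → ℂ)
    (hs1 : Differentiable ℂ s1) (hs2 : Differentiable ℂ s2)
    (hs3 : Differentiable ℂ s3)
    (hsys1 : ∀ w, deriv s1 w + deriv s2 w = s1 w * s2 w)
    (hsys2 : ∀ w, deriv s2 w + deriv s3 w = s2 w * s3 w)
    (hsys3 : ∀ w, deriv s1 w + deriv s3 w = s1 w * s3 w)
    (w : ℂ → ℂ) (hw : w = fun z => (a * z + b) / (a' * z + b'))
    (t1 t2 t3 : ℂ → ℂ)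
    (ht1 : t1 = fun z => -2 * a' / (a' * z + b') +
      ((a * b' - b * a') / (a' * z + b') ^ 2) * s1 (w z))
    (ht2 : t2 = fun z => -2 * a' / (a' * z + b') +
      ((a * b' - b * a') / (a' * z + b') ^ 2) * s2 (w z))
    (ht3 : t3 = fun z => -2 * a' / (a' * z + b') +
      ((a * b' - b * a') / (a' * z + b') ^ 2) * s3 (w z)) :
    ∀ z : ℂ, a' * z + b' ≠ 0 →
      deriv t1 z + deriv t2 z = t1 z * t2 z ∧
      deriv t2 z + deriv t3 z = t2 z * t3 z ∧
      deriv t1 z + deriv t3 z = t1 z * t3 z :=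
  darboux_halphen_invariance_general a b a' b' s1 s2 s3 hs1 hs2 hs3 hsys1 hsys2 hsys3 w hw t1 t2 t3
    ht1 ht2 ht3
end

section
/- Under the hypotheses of the previous extraction plus SΩS^T = Φ (n odd, Φ the standard symplectic-type antidiagonal matrix, Ω the intersection matrix with Ω_{i,n+2-i} = (-1)^{i-1}ã and Ω_{ij} = 0 for i+j ≤ n+1), the antidiagonal constraint gives s_{(n+2-i)(n+2-i)} = (-1)^{i+1}/(ã·s_{ii}) for i = 1,…,(n+1)/2, and consequently y_{i-1} = -y_{n-i} for i ≠ (n+1)/2. -/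
/-- For odd `n`, the constraint `SΩSᵀ = Φ` forces
`s_{(n+2-i)(n+2-i)} = (-1)^{i+1}/(aTil s_{ii})` for `i = 1,…,(n+1)/2`, and hence
`y_{i-1} = -y_{n-i}` for `i ≠ (n+1)/2`.  (Matrix indices are 0-based, so the
1-based diagonal entry `s_{ii}` is `s (i-1) (i-1)`.) -/
theorem SOmegaS_constraint
    (n : ℕ) (hodd : Odd n) (hn : 3 ≤ n) (aTil : ℂ) (haTil : aTil ≠ 0)
    (s : ℕ → ℕ → ℂ) (y : ℕ → ℂ) (Ω Φ : ℕ → ℕ → ℂ)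
    (hlow : ∀ i j, i ≤ n → j ≤ n → i < j → s i j = 0)
    (hdiag : ∀ i, i ≤ n → s i i ≠ 0)
    (hskew : ∀ i j, i ≤ n → j ≤ n → Ω i j = -Ω j i)
    (hΩ0 : ∀ i j, i + j ≤ n - 1 → Ω i j = 0)
    (hΩa : ∀ i j, i ≤ n → j ≤ n → i + j = n → Ω i j = (-1) ^ i * aTil)
    (hΦ : ∀ i j, Φ i j =
      if i + j = n then (if i < (n + 1) / 2 then 1 else -1) else 0)
    (hSOS : ∀ i j, i ≤ n → j ≤ n →
      (∑ k ∈ Finset.range (n + 1), ∑ l ∈ Finset.range (n + 1),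
        s i k * Ω k l * s j l) = Φ i j)
    (hy : ∀ i : ℕ, 2 ≤ i → i ≤ n - 1 →
      y (i - 1) = s 1 1 * s (i - 1) (i - 1) / (s 0 0 * s i i)) :
    (∀ i : ℕ, 1 ≤ i → i ≤ (n + 1) / 2 →
        s (n + 1 - i) (n + 1 - i) = (-1) ^ (i + 1) / (aTil * s (i - 1) (i - 1))) ∧
      ∀ i : ℕ, 2 ≤ i → i ≤ n - 1 → 2 * i ≠ n + 1 → y (i - 1) = -y (n - i) := by
  obtain ⟨m, hm⟩ := hodd
  have key : ∀ a, a ≤ n →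
      s a a * ((-1) ^ a * aTil) * s (n - a) (n - a)
        = (if a < (n + 1) / 2 then (1 : ℂ) else -1) := by
    intro a ha
    have h := hSOS a (n - a) ha (by omega)
    rw [hΦ, if_pos (by omega : a + (n - a) = n)] at h
    rw [← h]
    have step1 : (∑ k ∈ Finset.range (n + 1), ∑ l ∈ Finset.range (n + 1),
        s a k * Ω k l * s (n - a) l)
        = ∑ l ∈ Finset.range (n + 1), s a a * Ω a l * s (n - a) l := by
      apply Finset.sum_eq_single_of_mem a (Finset.mem_range.mpr (by omega))
      intro k hk hne
      rw [Finset.mem_range] at hk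
      apply Finset.sum_eq_zero
      intro l hl
      rw [Finset.mem_range] at hl
      rcases lt_or_gt_of_ne hne with hk' | hk'
      · by_cases hla : l ≤ n - a
        · rw [hΩ0 k l (by omega)]; ring
        · rw [hlow (n - a) l (by omega) (by omega) (by omega)]; ring
      · rw [hlow a k (by omega) (by omega) hk']; ring
    rw [step1]
    have step2 : (∑ l ∈ Finset.range (n + 1), s a a * Ω a l * s (n - a) l)
        = s a a * Ω a (n - a) * s (n - a) (n - a) := by
      apply Finset.sum_eq_single_of_mem (n - a) (Finset.mem_range.mpr (by omega))
      intro l hl hne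
      rw [Finset.mem_range] at hl
      rcases lt_or_gt_of_ne hne with hl' | hl'
      · rw [hΩ0 a l (by omega)]; ring
      · rw [hlow (n - a) l (by omega) (by omega) hl']; ring
    rw [step2, hΩa a (n - a) ha (by omega) (by omega)]
  constructor
  · intro i hi1 hi2
    have ha : i - 1 ≤ n := by omega
    have h := key (i - 1) ha
    rw [if_pos (by omega : i - 1 < (n + 1) / 2)] at h
    have hne : s (i - 1) (i - 1) ≠ 0 := hdiag _ (by omega)
    have hpow : ((-1 : ℂ)) ^ (i + 1) = (-1) ^ (i - 1) := by
      rw [show i + 1 = (i - 1) + 2 by omega, pow_add]; ring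
    have hnn : n + 1 - i = n - (i - 1) := by omega
    rw [hnn, hpow]
    have hne2 : ((-1 : ℂ)) ^ (i - 1) ≠ 0 := by
      apply pow_ne_zero; norm_num
    have hp2 : ((-1 : ℂ)) ^ (i - 1) * ((-1 : ℂ)) ^ (i - 1) = 1 := by
      rw [← pow_add, show (i - 1) + (i - 1) = 2 * (i - 1) by ring, pow_mul]
      norm_num
    field_simp
    linear_combination ((-1 : ℂ)) ^ (i - 1) * h
      - (s (n - (i - 1)) (n - (i - 1)) * aTil * s (i - 1) (i - 1)) * hp2
  · intro i hi1 hi2 hi3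
    have e1 := key i (by omega)
    have e2 := key (i - 1) (by omega)
    have hyi := hy i hi1 hi2
    have hyn := hy (n + 1 - i) (by omega) (by omega)
    rw [show n + 1 - i - 1 = n - i by omega] at hyn
    have hind : n - (i - 1) = n + 1 - i := by omega
    rw [hind] at e2
    have heps : (if i < (n + 1) / 2 then (1 : ℂ) else -1)
        = (if i - 1 < (n + 1) / 2 then (1 : ℂ) else -1) := by
      by_cases h1 : i < (n + 1) / 2
      · rw [if_pos h1, if_pos (by omega)]
      · rw [if_neg h1, if_neg (by omega)]
    rw [heps] at e1
    set e : ℂ := if i - 1 < (n + 1) / 2 then (1 : ℂ) else -1 with he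
    have hene : e ≠ 0 := by
      rw [he]; split <;> norm_num
    obtain ⟨j, hj⟩ : ∃ j, i = j + 1 := ⟨i - 1, by omega⟩
    have hpow : ((-1 : ℂ)) ^ i = -((-1) ^ (i - 1)) := by
      rw [hj, Nat.add_sub_cancel, pow_succ]; ring
    rw [hpow] at e1
    have hA : s (i - 1) (i - 1) ≠ 0 := hdiag _ (by omega)
    have hB : s i i ≠ 0 := hdiag _ (by omega)
    have hC : s (n - i) (n - i) ≠ 0 := hdiag _ (by omega)
    have hD : s (n + 1 - i) (n + 1 - i) ≠ 0 := hdiag _ (by omega)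
    have h0 : s 0 0 ≠ 0 := hdiag _ (by omega)
    have h1 : s 1 1 ≠ 0 := hdiag _ (by omega)
    have hp : ((-1 : ℂ)) ^ (i - 1) ≠ 0 := by apply pow_ne_zero; norm_num
    rw [hyi, hyn]
    field_simp
    have hCval : s (n - i) (n - i)
        = -e / (s i i * ((-1) ^ (i - 1) * aTil)) := by
      rw [eq_div_iff (by exact mul_ne_zero hB (mul_ne_zero hp haTil))]
      linear_combination -e1
    have hDval : s (n + 1 - i) (n + 1 - i)
        = e / (s (i - 1) (i - 1) * ((-1) ^ (i - 1) * aTil)) := by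
      rw [eq_div_iff (by exact mul_ne_zero hA (mul_ne_zero hp haTil))]
      linear_combination e2
    rw [hCval, hDval]
    field_simp
end

section
/- For the 4×4 case (n = 3): given the Picard-Fuchs companion relation, the pairing with ⟨ω_1,ω_4⟩ = ã where ϑã = (1/2)ã·a_3, ⟨ω_1,ω_i⟩ = 0 for i ≤ 3, and Leibniz rule, the full intersection matrix is Ω = [[0,0,0,ã],[0,0,-ã,Ω_{24}],[0,ã,0,Ω_{34}],[-ã,-Ω_{24},-Ω_{34},0]] with Ω_{24} = -(1/2)ã a_3 and Ω_{34} = (1/4)ã a_3^2 + ã a_2 - (1/2)ã ϑa_3. -/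
/-- For `n = 3`: the full intersection matrix of the `ω_i = ϑ^{i-1}ω` is
`[[0,0,0,aTil],[0,0,-aTil,Ω₂₄],[0,aTil,0,Ω₃₄],[-aTil,-Ω₂₄,-Ω₃₄,0]]` with
`Ω₂₄ = -(1/2) aTil a₃` and `Ω₃₄ = (1/4) aTil a₃² + aTil a₂ - (1/2) aTil ϑa₃`. -/
theorem intersection_matrix_n3
    (F V : Type*) [CommRing F] [Algebra ℂ F] [AddCommGroup V] [Module F V]
    (δ : Derivation ℂ F F) (ϑ : V → V) (B : V →ₗ[F] V →ₗ[F] F)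
    (hLeib : ∀ α β : V, δ (B α β) = B (ϑ α) β + B α (ϑ β))
    (hskew : ∀ α β : V, B α β = -B β α)
    (ω : V) (a : ℕ → F) (aTil : F)
    (hPF : ϑ (ϑ^[3] ω) = a 0 • ω + a 1 • ϑ^[1] ω + a 2 • ϑ^[2] ω + a 3 • ϑ^[3] ω)
    (haTil : B ω (ϑ^[3] ω) = aTil)
    (hδaTil : δ aTil = (1 / 2 : ℂ) • (aTil * a 3))
    (h0 : ∀ i < 3, B ω (ϑ^[i] ω) = 0) :
    Matrix.of (fun i j : Fin 4 => B (ϑ^[(i : ℕ)] ω) (ϑ^[(j : ℕ)] ω)) =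
      !![0, 0, 0, aTil;
         0, 0, -aTil, (-(1 / 2) : ℂ) • (aTil * a 3);
         0, aTil, 0, (1 / 4 : ℂ) • (aTil * (a 3) ^ 2) + aTil * a 2 - (1 / 2 : ℂ) • (aTil * δ (a 3));
         -aTil, -((-(1 / 2) : ℂ) • (aTil * a 3)),
           -((1 / 4 : ℂ) • (aTil * (a 3) ^ 2) + aTil * a 2 - (1 / 2 : ℂ) • (aTil * δ (a 3))), 0] := by
  -- diagonal vanishes since `F` is a `ℂ`-algebra (characteristic 0)
  have hsq : ∀ α : V, B α α = 0 := by
    intro α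
    have h1 : B α α + B α α = 0 := by linear_combination hskew α α
    have h2 : (2 : ℂ) • B α α = 0 := by rw [two_smul]; exact h1
    have h3 := congrArg (fun x => (2 : ℂ)⁻¹ • x) h2
    simpa [smul_smul] using h3
  have h00 : B ω ω = 0 := by simpa using h0 0 (by norm_num)
  have h01 : B ω (ϑ^[1] ω) = 0 := h0 1 (by norm_num)
  have h02 : B ω (ϑ^[2] ω) = 0 := h0 2 (by norm_num)
  have hit : ∀ k, ϑ (ϑ^[k] ω) = ϑ^[k + 1] ω := fun k =>
    (Function.iterate_succ_apply' ϑ k ω).symm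
  have hone : ϑ ω = ϑ^[1] ω := rfl
  -- expansion of B α (ϑ^[4] ω)
  have hPF4 : ϑ^[4] ω = a 0 • ω + a 1 • ϑ^[1] ω + a 2 • ϑ^[2] ω + a 3 • ϑ^[3] ω := by
    rw [← hit 3]; exact hPF
  have hB4 : ∀ α : V, B α (ϑ^[4] ω) =
      a 0 * B α ω + a 1 * B α (ϑ^[1] ω) + a 2 * B α (ϑ^[2] ω) + a 3 * B α (ϑ^[3] ω) := by
    intro α
    rw [hPF4]
    simp [map_add, map_smul, smul_eq_mul, mul_comm]
  -- algebra map of 1/2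
  set t : F := algebraMap ℂ F (1 / 2 : ℂ) with ht_def
  have ht : t + t = 1 := by
    rw [ht_def, ← map_add, show (1 / 2 : ℂ) + 1 / 2 = 1 by norm_num, map_one]
  have hs : ∀ x : F, (1 / 2 : ℂ) • x = t * x := fun x => Algebra.smul_def _ _
  have hsn : ∀ x : F, (-(1 / 2) : ℂ) • x = -(t * x) := by
    intro x
    rw [show (-(1 / 2) : ℂ) = -(1 / 2 : ℂ) by norm_num, neg_smul, hs]
  have hsq4 : ∀ x : F, (1 / 4 : ℂ) • x = t * t * x := by
    intro x
    rw [show (1 / 4 : ℂ) = (1 / 2) * (1 / 2) by norm_num, mul_smul, hs, hs, mul_assoc]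
  -- b12
  have hb12 : B (ϑ^[1] ω) (ϑ^[2] ω) = -aTil := by
    have h := hLeib ω (ϑ^[2] ω)
    rw [h02, map_zero, hit 2, hone, haTil] at h
    linear_combination -h
  -- b13
  have hb13 : B (ϑ^[1] ω) (ϑ^[3] ω) = (-(1 / 2) : ℂ) • (aTil * a 3) := by
    have h := hLeib ω (ϑ^[3] ω)
    rw [haTil, hδaTil, hit 3, hone, hB4 ω, h00, h01, h02, haTil, hs] at h
    rw [hsn]
    linear_combination -h + (aTil * a 3) * ht
  -- b23
  have hb23 : B (ϑ^[2] ω) (ϑ^[3] ω) =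
      (1 / 4 : ℂ) • (aTil * a 3 ^ 2) + aTil * a 2 - (1 / 2 : ℂ) • (aTil * δ (a 3)) := by
    have h := hLeib (ϑ^[1] ω) (ϑ^[3] ω)
    rw [hit 1, hit 3, hb13, hB4 (ϑ^[1] ω)] at h
    have h10 : B (ϑ^[1] ω) ω = 0 := by rw [hskew, h01, neg_zero]
    have h11 : B (ϑ^[1] ω) (ϑ^[1] ω) = 0 := hsq _
    rw [h10, h11, hb12, hb13] at h
    have hd : δ ((-(1 / 2) : ℂ) • (aTil * a 3)) =
        -(t * (aTil * δ (a 3) + a 3 * (t * (aTil * a 3)))) := by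
      rw [Derivation.map_smul, Derivation.leibniz, smul_eq_mul, smul_eq_mul, hδaTil, hs, hsn]
    rw [hd, hsn] at h
    rw [hsq4, hs]
    linear_combination -h + (-(t * (aTil * a 3 ^ 2))) * ht
  -- skew versions
  have h10 : B (ϑ^[1] ω) ω = 0 := by rw [hskew, h01, neg_zero]
  have h20 : B (ϑ^[2] ω) ω = 0 := by rw [hskew, h02, neg_zero]
  have h21 : B (ϑ^[2] ω) (ϑ^[1] ω) = aTil := by rw [hskew, hb12, neg_neg]
  have h30 : B (ϑ^[3] ω) ω = -aTil := by rw [hskew, haTil]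
  have h31 : B (ϑ^[3] ω) (ϑ^[1] ω) = -((-(1 / 2) : ℂ) • (aTil * a 3)) := by
    rw [hskew, hb13]
  have h32 : B (ϑ^[3] ω) (ϑ^[2] ω) =
      -((1 / 4 : ℂ) • (aTil * a 3 ^ 2) + aTil * a 2 - (1 / 2 : ℂ) • (aTil * δ (a 3))) := by
    rw [hskew, hb23]
  ext i j
  fin_cases i <;> fin_cases j <;>
    simp only [Matrix.of_apply, Fin.isValue, Matrix.cons_val', Matrix.cons_val_zero,
      Matrix.cons_val_one, Matrix.head_cons, Matrix.head_fin_const, Matrix.empty_val',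
      Matrix.cons_val_fin_one] <;>
    first
      | exact hsq _
      | exact h00 | exact h01 | exact h02 | exact haTil
      | exact h10 | exact hb12 | exact hb13
      | exact h20 | exact h21 | exact hb23
      | exact h30 | exact h31 | exact h32
end
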